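/- arXiv:1505.03894 — 4 statements merged into one kernel-verified Lean document; each statement's English description precedes it below -/
import Mathlib

section
/- Let g : ℝ → ℝ be a smooth nowhere-vanishing function. If f(u,λ) is a polynomial in λ with smooth coefficients in u satisfying the equation (u − λ)·g(u)·∂f/∂u = (1/2)·∂ᵤ((u − λ)g(u))·f identically in u and λ, then f = 0. -/
open Set

/-- If a differentiable `φ` satisfies the ODE
`(u-c) g(u) φ'(u) = ½ (g(u)+(u-c)g'(u)) φ(u)` with `g` differentiable and
nowhere zero, then `φ` vanishes on `(c,∞)`. -/
lemma aux_zero_right (g : ℝ → ℝ) (hgd : Differentiable ℝ g) (hg0 : ∀ u, g u ≠ 0)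
    (φ : ℝ → ℝ) (hφ : Differentiable ℝ φ) (c : ℝ)
    (hode : ∀ u, (u - c) * g u * deriv φ u
      = (1 / 2) * (g u + (u - c) * deriv g u) * φ u) :
    ∀ x, c < x → φ x = 0 := by
  intro x hx
  set w : ℝ → ℝ := fun u => (u - c) * g u with hw_def
  have hw : ∀ u, HasDerivAt w (g u + (u - c) * deriv g u) u := by
    intro u
    have h1 : HasDerivAt (fun u : ℝ => u - c) 1 u := (hasDerivAt_id u).sub_const c
    have h2 : HasDerivAt g (deriv g u) u := (hgd u).hasDerivAt
    simpa using h1.fun_mul h2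
  set h : ℝ → ℝ := fun u => φ u * φ u with hh_def
  have hh : ∀ u, HasDerivAt h (2 * φ u * deriv φ u) u := by
    intro u
    have := ((hφ u).hasDerivAt).fun_mul ((hφ u).hasDerivAt)
    refine this.congr_deriv ?_
    ring
  have hφc : φ c = 0 := by
    have := hode c
    simp at this
    rcases this with h0 | h0
    · exact absurd h0 (hg0 c)
    · exact h0
  -- key identity
  have key : ∀ u, w u * (2 * φ u * deriv φ u) = (g u + (u - c) * deriv g u) * h u := by
    intro u
    simp only [hw_def, hh_def]
    calc (u - c) * g u * (2 * φ u * deriv φ u)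
        = 2 * φ u * ((u - c) * g u * deriv φ u) := by ring
      _ = 2 * φ u * ((1 / 2) * (g u + (u - c) * deriv g u) * φ u) := by rw [hode u]
      _ = (g u + (u - c) * deriv g u) * (φ u * φ u) := by ring
  -- w nonzero on Ioi c
  have hwne : ∀ y, c < y → w y ≠ 0 := fun y hy =>
    mul_ne_zero (by linarith) (hg0 y)
  -- ψ = h / w has derivative 0 on Ioi c
  set ψ : ℝ → ℝ := fun u => h u / w u with hψ_def
  have hψd : ∀ y, c < y → HasDerivAt ψ 0 y := by
    intro y hy
    have := ((hh y).fun_div (hw y) (hwne y hy))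
    refine this.congr_deriv (Eq.symm ?_)
    rw [eq_comm, div_eq_zero_iff]
    left
    have := key y
    linarith
  -- ψ constant on (c, x]
  have hconst : ∀ y, c < y → ψ y = ψ x := by
    intro y hy
    rcases lt_trichotomy y x with hyx | hyx | hyx
    · have := constant_of_has_deriv_right_zero (f := ψ) (a := y) (b := x)
        (fun z hz => ((hψd z (lt_of_lt_of_le hy hz.1)).continuousAt).continuousWithinAt)
        (fun z hz => ((hψd z (lt_of_lt_of_le hy hz.1)).hasDerivWithinAt))
      exact (this x ⟨le_of_lt hyx, le_refl x⟩).symm ▸ rfl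
    · rw [hyx]
    · have := constant_of_has_deriv_right_zero (f := ψ) (a := x) (b := y)
        (fun z hz => ((hψd z (lt_of_lt_of_le hx hz.1)).continuousAt).continuousWithinAt)
        (fun z hz => ((hψd z (lt_of_lt_of_le hx hz.1)).hasDerivWithinAt))
      exact this y ⟨le_of_lt hyx, le_refl y⟩
  set K : ℝ := ψ x with hK_def
  have hKw : ∀ y ∈ Icc c x, h y = K * w y := by
    intro y hy
    rcases eq_or_lt_of_le hy.1 with hyc | hyc
    · simp [hh_def, hw_def, ← hyc, hφc]
    · have h1 := hconst y hyc
      have h2 : h y / w y = K := h1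
      field_simp [hwne y hyc] at h2
      linarith [h2]
  -- compare derivatives at c within Icc c x
  have hud : UniqueDiffWithinAt ℝ (Icc c x) c := (uniqueDiffOn_Icc hx) c ⟨le_refl c, le_of_lt hx⟩
  have hd1 : HasDerivWithinAt h 0 (Icc c x) c := by
    have := (hh c).hasDerivWithinAt (s := Icc c x)
    simpa [hφc] using this
  have hd2 : HasDerivWithinAt h (K * g c) (Icc c x) c := by
    have h2 : HasDerivWithinAt (fun y => K * w y) (K * (g c + (c - c) * deriv g c)) (Icc c x) c :=
      ((hw c).const_mul K).hasDerivWithinAt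
    have h3 : HasDerivWithinAt h (K * (g c + (c - c) * deriv g c)) (Icc c x) c :=
      h2.congr (fun y hy => (hKw y hy).symm ▸ rfl) (by simpa [hw_def, hφc, hh_def] using (hKw c ⟨le_refl c, le_of_lt hx⟩))
    simpa using h3
  have hK0 : K * g c = 0 := by
    have := hd1.derivWithin hud
    have := hd2.derivWithin hud
    rw [hd1.derivWithin hud] at this
    exact this.symm
  have hK : K = 0 := by
    rcases mul_eq_zero.1 hK0 with h | h
    · exact h
    · exact absurd h (hg0 c)
  have hhx : h x = 0 := by
    rw [hKw x ⟨le_of_lt hx, le_refl x⟩, hK, zero_mul]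
  exact mul_self_eq_zero.1 hhx

/-- If `f(u,λ) = Σ f_i(u) λ^i` (smooth coefficients) satisfies
`(u-λ) g(u) ∂f/∂u = (1/2) ∂_u((u-λ)g(u)) f` identically, with `g` smooth and
nowhere vanishing, then `f = 0`. -/
theorem stmt_0 (g : ℝ → ℝ) (hg : ContDiff ℝ (⊤ : ℕ∞) g) (hg0 : ∀ u, g u ≠ 0)
    (n : ℕ) (f : ℕ → ℝ → ℝ) (hf : ∀ i, ContDiff ℝ (⊤ : ℕ∞) (f i))
    (heq : ∀ u l : ℝ,
      (u - l) * g u * (∑ i ∈ Finset.range (n + 1), deriv (f i) u * l ^ i) =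
        (1 / 2) * (g u + (u - l) * deriv g u) *
          (∑ i ∈ Finset.range (n + 1), f i u * l ^ i)) :
    ∀ i ∈ Finset.range (n + 1), ∀ u : ℝ, f i u = 0 := by
  have hgd : Differentiable ℝ g := hg.differentiable (by simp)
  have hfd : ∀ i, Differentiable ℝ (f i) := fun i => (hf i).differentiable (by simp)
  -- for every c < u, the sum vanishes at u
  have hvanish : ∀ c u : ℝ, c < u → ∑ i ∈ Finset.range (n + 1), f i u * c ^ i = 0 := by
    intro c u hcu
    set φ : ℝ → ℝ := fun x => ∑ i ∈ Finset.range (n + 1), f i x * c ^ i with hφ_def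
    have hφdiff : Differentiable ℝ φ := by
      apply Differentiable.fun_sum
      intro i _
      exact (hfd i).mul_const _
    have hderiv : ∀ x, deriv φ x = ∑ i ∈ Finset.range (n + 1), deriv (f i) x * c ^ i := by
      intro x
      rw [hφ_def]
      rw [deriv_fun_sum (fun i _ => ((hfd i).differentiableAt).mul_const _)]
      exact Finset.sum_congr rfl fun i _ => by
        rw [deriv_mul_const ((hfd i).differentiableAt)]
    have hode : ∀ x, (x - c) * g x * deriv φ x
        = (1 / 2) * (g x + (x - c) * deriv g x) * φ x := by
      intro x
      rw [hderiv x]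
      exact heq x c
    exact aux_zero_right g hgd hg0 φ hφdiff c hode u hcu
  intro i hi u
  set p : Polynomial ℝ :=
    ∑ j ∈ Finset.range (n + 1), Polynomial.C (f j u) * Polynomial.X ^ j with hp_def
  have heval : ∀ c : ℝ, p.eval c = ∑ j ∈ Finset.range (n + 1), f j u * c ^ j := by
    intro c
    simp [hp_def, Polynomial.eval_finset_sum]
  have hp0 : p = 0 := by
    apply Polynomial.eq_zero_of_infinite_isRoot
    apply Set.Infinite.mono (s := Set.Iio u)
    · intro c hc
      simp only [Set.mem_setOf_eq, Polynomial.IsRoot, heval]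
      exact hvanish c u hc
    · exact Set.Iio_infinite u
  have hcoeff : p.coeff i = f i u := by
    simp only [hp_def, Polynomial.finset_sum_coeff, Polynomial.coeff_C_mul,
      Polynomial.coeff_X_pow]
    rw [Finset.sum_eq_single i]
    · simp
    · intro j _ hj; simp [Ne.symm hj]
    · intro h; exact absurd hi h
  rw [← hcoeff, hp0, Polynomial.coeff_zero]
end

section
/- Let g : ℝ → ℝ be smooth and nowhere vanishing. The set of smooth functions on ℝ of the form −(u−λ)g(u)h'(u,λ) + (1/2)∂ᵤ((u−λ)g(u))·h(u,λ) for some h ∈ C^∞(ℝ)[λ], restricted to those outputs independent of λ, equals g(u)^{3/2}·ℝ[u] (assuming g > 0 so that g^{3/2} and g^{1/2} are defined). -/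
noncomputable def st3cc (n : ℕ) : ℕ → ℝ
  | 0 => ((1:ℝ)/2 - (n:ℝ))⁻¹
  | (j+1) => -(st3cc n j) * ((n:ℝ) - (j:ℝ)) / ((1:ℝ)/2 - (n:ℝ) + ((j:ℝ)+1))

lemma st3_den (n j : ℕ) : (1:ℝ)/2 - (n:ℝ) + ((j:ℝ)+1) ≠ 0 := by
  intro h
  have h2 : ((2*j+3 : ℕ) : ℝ) = ((2*n : ℕ) : ℝ) := by push_cast; linarith
  have := Nat.cast_injective (R := ℝ) h2
  omega

lemma st3_den0 (n : ℕ) : (1:ℝ)/2 - (n:ℝ) ≠ 0 := by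
  intro h
  have h2 : ((1 : ℕ) : ℝ) = ((2*n : ℕ) : ℝ) := by push_cast; linarith
  have := Nat.cast_injective (R := ℝ) h2
  omega

lemma st3cc_eq_zero (n : ℕ) : ∀ j, n < j → st3cc n j = 0 := by
  intro j
  induction j with
  | zero => omega
  | succ j ih =>
    intro hj
    rcases Nat.lt_or_ge n j with h | h
    · rw [st3cc, ih h]; ring
    · have : n = j := by omega
      subst this
      rw [st3cc, sub_self, mul_zero, zero_div]
lemma st3_tele (n M : ℕ) (hM : n ≤ M) (u l : ℝ) :
    ∑ j ∈ Finset.range (M+1),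
      (-(u - l) * (st3cc n j * ((n - j : ℕ):ℝ) * u ^ (n - j - 1)) * l ^ j
        + (1/2) * (st3cc n j * u ^ (n - j)) * l ^ j) = u ^ n := by
  have hred : ∑ j ∈ Finset.range (M+1),
      (-(u - l) * (st3cc n j * ((n - j : ℕ):ℝ) * u ^ (n - j - 1)) * l ^ j
        + (1/2) * (st3cc n j * u ^ (n - j)) * l ^ j)
      = ∑ j ∈ Finset.range (n+1),
      (-(u - l) * (st3cc n j * ((n - j : ℕ):ℝ) * u ^ (n - j - 1)) * l ^ j
        + (1/2) * (st3cc n j * u ^ (n - j)) * l ^ j) := by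
    apply (Finset.sum_subset (Finset.range_subset_range.2 (by omega)) _).symm
    intro j _ hj
    have hj' : n < j := by simpa using Nat.lt_of_succ_le (by
      simp [Finset.mem_range] at hj; omega)
    rw [st3cc_eq_zero n j hj']; ring
  rw [hred]
  set F : ℕ → ℝ := fun j => st3cc n j * ((1:ℝ)/2 - ((n:ℝ) - (j:ℝ))) * u ^ (n - j) * l ^ j
    with hF
  have hstep : ∀ j ∈ Finset.range (n+1),
      (-(u - l) * (st3cc n j * ((n - j : ℕ):ℝ) * u ^ (n - j - 1)) * l ^ j
        + (1/2) * (st3cc n j * u ^ (n - j)) * l ^ j) = F j - F (j+1) := by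
    intro j hj
    have hjn : j ≤ n := by simp [Finset.mem_range] at hj; omega
    rcases eq_or_lt_of_le hjn with heq | hlt
    · subst heq
      have h1 : F (j+1) = 0 := by
        rw [hF]; simp [st3cc_eq_zero j (j+1) (by omega)]
      rw [h1, hF]
      simp only [Nat.sub_self, Nat.zero_sub, Nat.cast_zero, pow_zero, sub_zero]
      ring
    · -- j < n
      have hc : ((n - j : ℕ):ℝ) = (n:ℝ) - (j:ℝ) := by
        push_cast [Nat.cast_sub hjn]; ring
      set k := n - j - 1 with hk
      have hexp : n - j = k + 1 := by omega
      have hexp2 : n - (j+1) = k := by omega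
      have hcc : st3cc n (j+1) * ((1:ℝ)/2 - ((n:ℝ) - ((j:ℝ)+1)))
          = -(st3cc n j) * ((n:ℝ) - (j:ℝ)) := by
        rw [st3cc]
        have : (1:ℝ)/2 - ((n:ℝ) - ((j:ℝ)+1)) = (1:ℝ)/2 - (n:ℝ) + ((j:ℝ)+1) := by ring
        rw [this, div_mul_cancel₀ _ (st3_den n j)]
      have hck : ((k:ℕ):ℝ) = (n:ℝ) - (j:ℝ) - 1 := by
        rw [hk, Nat.sub_sub, Nat.cast_sub (by omega : j+1 ≤ n)]
        push_cast; ring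
      rw [hF]
      simp only [hexp2, hexp, hc]
      push_cast
      linear_combination (u ^ k * l ^ (j+1)) * hcc
        + (st3cc n j * u ^ k * l ^ j * (l - u)) * hck
  rw [Finset.sum_congr rfl hstep, Finset.sum_range_sub']
  have h1 : F (n+1) = 0 := by
    rw [hF]; simp [st3cc_eq_zero n (n+1) (by omega)]
  have h0 : F 0 = u ^ n := by
    rw [hF]
    simp only [Nat.sub_zero, pow_zero, mul_one, Nat.cast_zero, sub_zero]
    rw [st3cc, inv_mul_cancel₀ (st3_den0 n), one_mul]
  rw [h1, h0, sub_zero]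


lemma st3_core (u l g dg s ds SA SB : ℝ) (h1 : s^2 = g) (h2 : dg = 2*s*ds) :
    -(u-l)*g*(ds*SA + s*SB) + (1/2)*(g + (u-l)*dg)*(s*SA)
      = s^3 * (-(u-l)*SB + (1/2)*SA) := by
  subst h1 h2; ring

lemma st3_rpow (x : ℝ) (hx : 0 < x) : x ^ ((3:ℝ)/2) = Real.sqrt x ^ 3 := by
  rw [Real.sqrt_eq_rpow, ← Real.rpow_natCast (x ^ ((1:ℝ)/2)) 3, ← Real.rpow_mul hx.le]
  norm_num

lemma st3_deriv_monomial (a : ℝ) (k : ℕ) (u : ℝ) :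
    deriv (fun u => a * u ^ k) u = a * (k:ℝ) * u ^ (k-1) := by
  rw [deriv_const_mul_field]
  rw [deriv_pow_field]
  ring

lemma st3_coeffs_zero (N : ℕ) (a : ℕ → ℝ)
    (h : ∀ l : ℝ, ∑ k ∈ Finset.range N, a k * l ^ k = 0) :
    ∀ k, k < N → a k = 0 := by
  set P : Polynomial ℝ := ∑ k ∈ Finset.range N, Polynomial.C (a k) * Polynomial.X ^ k with hP
  have hP0 : P = 0 := by
    apply Polynomial.funext
    intro l
    simp only [hP, Polynomial.eval_finset_sum, Polynomial.eval_mul, Polynomial.eval_C,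
      Polynomial.eval_pow, Polynomial.eval_X, Polynomial.eval_zero]
    exact h l
  intro k hk
  have : P.coeff k = a k := by
    simp only [hP, Polynomial.finset_sum_coeff, Polynomial.coeff_C_mul, Polynomial.coeff_X_pow]
    rw [Finset.sum_eq_single k]
    · simp
    · intro b _ hb; simp [Ne.symm hb]
    · intro hk'; exact absurd (Finset.mem_range.2 hk) hk'
  rw [hP0] at this
  simpa using this.symm

lemma st3_antideriv (f : ℝ → ℝ) (hf : Differentiable ℝ f) (q : Polynomial ℝ)
    (h : ∀ u, deriv f u = q.eval u) : ∃ r : Polynomial ℝ, ∀ u, f u = r.eval u := by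
  set Q : Polynomial ℝ := ∑ i ∈ Finset.range (q.natDegree + 1),
      Polynomial.C (q.coeff i / (i+1)) * Polynomial.X ^ (i+1) with hQ
  have hQd : ∀ u : ℝ, (Polynomial.derivative Q).eval u = q.eval u := by
    intro u
    rw [hQ, map_sum]
    simp only [Polynomial.derivative_C_mul, Polynomial.derivative_X_pow,
      Polynomial.eval_finset_sum, Polynomial.eval_mul, Polynomial.eval_C, Polynomial.eval_pow,
      Polynomial.eval_X, Polynomial.eval_natCast]
    rw [Polynomial.eval_eq_sum_range (p := q) u]
    apply Finset.sum_congr rfl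
    intro i _
    have : ((i:ℝ)+1) ≠ 0 := by positivity
    push_cast
    field_simp
  have hder : ∀ u : ℝ, deriv (fun x => f x - Q.eval x) u = 0 := by
    intro u
    rw [deriv_fun_sub (hf u) (Polynomial.differentiable Q u)]
    rw [h u, Polynomial.deriv, hQd]
    ring
  have hconst : ∀ u : ℝ, f u - Q.eval u = f 0 - Q.eval 0 := by
    intro u
    exact is_const_of_deriv_eq_zero (hf.sub (Polynomial.differentiable Q)) hder u 0
  refine ⟨Q + Polynomial.C (f 0 - Q.eval 0), fun u => ?_⟩
  have := hconst u
  simp only [Polynomial.eval_add, Polynomial.eval_C]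
  linarith

/-- For smooth positive `g`, the λ-independent values of
`-(u-λ)g h' + (1/2)∂_u((u-λ)g) h`, `h ∈ C^∞(ℝ)[λ]`, are exactly `g^{3/2}·ℝ[u]`. -/
theorem stmt_3 (g : ℝ → ℝ) (hg : ContDiff ℝ (⊤ : ℕ∞) g) (hgpos : ∀ u, 0 < g u) :
    {φ : ℝ → ℝ | ∃ (m : ℕ) (h : ℕ → ℝ → ℝ), (∀ i, ContDiff ℝ (⊤ : ℕ∞) (h i)) ∧
      ∀ u l : ℝ,
        -(u - l) * g u * (∑ i ∈ Finset.range (m + 1), deriv (h i) u * l ^ i)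
          + (1 / 2) * (g u + (u - l) * deriv g u) *
            (∑ i ∈ Finset.range (m + 1), h i u * l ^ i) = φ u} =
    {φ : ℝ → ℝ | ∃ p : Polynomial ℝ, ∀ u : ℝ, φ u = g u ^ ((3 : ℝ) / 2) * p.eval u} := by
  have hgd : Differentiable ℝ g := hg.differentiable (by simp)
  set sf : ℝ → ℝ := fun u => Real.sqrt (g u) with hsf
  have hsfpos : ∀ u, 0 < sf u := fun u => Real.sqrt_pos.2 (hgpos u)
  have hsfd : ∀ u, HasDerivAt sf (deriv g u / (2 * sf u)) u :=
    fun u => (hgd u).hasDerivAt.sqrt (hgpos u).ne'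
  have hsfdiff : ∀ u, DifferentiableAt ℝ sf u := fun u => (hsfd u).differentiableAt
  have hsq : ∀ u, sf u ^ 2 = g u := fun u => Real.sq_sqrt (hgpos u).le
  have hdg : ∀ u, deriv g u = 2 * sf u * deriv sf u := by
    intro u
    rw [(hsfd u).deriv, mul_comm, div_mul_cancel₀ _ (mul_pos two_pos (hsfpos u)).ne']
  have hcube : ∀ u, g u ^ ((3:ℝ)/2) = sf u ^ 3 := fun u => st3_rpow _ (hgpos u)
  ext φ
  simp only [Set.mem_setOf_eq]
  constructor
  · -- ⊆ : λ-independent outputs are g^{3/2} · polynomials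
    rintro ⟨m, h, hsm, hid⟩
    set t : ℕ → ℝ → ℝ := fun i u => h i u / sf u with ht
    have htdiff : ∀ i, Differentiable ℝ (t i) :=
      fun i => ((hsm i).differentiable (by simp)).div (fun u => hsfdiff u) (fun u => (hsfpos u).ne')
    have hht : ∀ i, h i = fun u => sf u * t i u := by
      intro i; funext u
      rw [ht]; simp only
      rw [mul_comm, div_mul_cancel₀ _ (hsfpos u).ne']
    have hdh : ∀ i u, deriv (h i) u = deriv sf u * t i u + sf u * deriv (t i) u := by
      intro i u
      conv_lhs => rw [hht i]
      exact deriv_mul (hsfdiff u) (htdiff i u)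
    have hsum1 : ∀ u l : ℝ, ∑ i ∈ Finset.range (m+1), deriv (h i) u * l ^ i
        = deriv sf u * (∑ i ∈ Finset.range (m+1), t i u * l ^ i)
          + sf u * (∑ i ∈ Finset.range (m+1), deriv (t i) u * l ^ i) := by
      intro u l
      rw [Finset.mul_sum, Finset.mul_sum, ← Finset.sum_add_distrib]
      exact Finset.sum_congr rfl fun i _ => by rw [hdh]; ring
    have hsum2 : ∀ u l : ℝ, ∑ i ∈ Finset.range (m+1), h i u * l ^ i
        = sf u * (∑ i ∈ Finset.range (m+1), t i u * l ^ i) := by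
      intro u l
      rw [Finset.mul_sum]
      exact Finset.sum_congr rfl fun i _ => by rw [hht i]; ring
    set F : ℝ → ℝ := fun u => φ u / sf u ^ 3 with hFdef
    have hkey : ∀ u l : ℝ, ∑ i ∈ Finset.range (m+1),
        (-(u - l) * deriv (t i) u * l ^ i + (1/2) * t i u * l ^ i) = F u := by
      intro u l
      have hthis := hid u l
      rw [hsum1, hsum2] at hthis
      have hcore := st3_core u l (g u) (deriv g u) (sf u) (deriv sf u)
        (∑ i ∈ Finset.range (m+1), t i u * l ^ i)
        (∑ i ∈ Finset.range (m+1), deriv (t i) u * l ^ i) (hsq u) (hdg u)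
      have h3 : sf u ^ 3 ≠ 0 := pow_ne_zero _ (hsfpos u).ne'
      rw [hFdef]; simp only
      rw [eq_div_iff h3]
      have hsplit : ∑ i ∈ Finset.range (m+1),
          (-(u - l) * deriv (t i) u * l ^ i + (1/2) * t i u * l ^ i)
          = -(u-l) * (∑ i ∈ Finset.range (m+1), deriv (t i) u * l ^ i)
            + (1/2) * (∑ i ∈ Finset.range (m+1), t i u * l ^ i) := by
        rw [Finset.mul_sum, Finset.mul_sum, ← Finset.sum_add_distrib]
        exact Finset.sum_congr rfl fun i _ => by ring
      rw [hsplit]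
      linear_combination hthis - hcore
    have hAk : ∀ u : ℝ, deriv (t m) u = 0
        ∧ (∀ k, 1 ≤ k → k ≤ m → deriv (t (k-1)) u = u * deriv (t k) u - (1/2) * t k u)
        ∧ F u = -u * deriv (t 0) u + (1/2) * t 0 u := by
      intro u
      set a : ℕ → ℝ := fun k => (if k < m+1 then -u * deriv (t k) u + (1/2) * t k u else 0)
        + (if 1 ≤ k then deriv (t (k-1)) u else 0) + (if k = 0 then -(F u) else 0) with ha
      have hz : ∀ l : ℝ, ∑ k ∈ Finset.range (m+2), a k * l ^ k = 0 := by
        intro l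
        have e1 : ∑ k ∈ Finset.range (m+2), a k * l ^ k
            = (∑ k ∈ Finset.range (m+2),
                (if k < m+1 then -u * deriv (t k) u + (1/2) * t k u else 0) * l ^ k)
              + (∑ k ∈ Finset.range (m+2), (if 1 ≤ k then deriv (t (k-1)) u else 0) * l ^ k)
              + (∑ k ∈ Finset.range (m+2), (if k = 0 then -(F u) else 0) * l ^ k) := by
          rw [← Finset.sum_add_distrib, ← Finset.sum_add_distrib]
          exact Finset.sum_congr rfl fun k _ => by rw [ha]; ring
        have e2 : ∑ k ∈ Finset.range (m+2),
            (if k < m+1 then -u * deriv (t k) u + (1/2) * t k u else 0) * l ^ k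
            = ∑ k ∈ Finset.range (m+1), (-u * deriv (t k) u + (1/2) * t k u) * l ^ k := by
          rw [Finset.sum_range_succ, if_neg (lt_irrefl (m+1)), zero_mul, add_zero]
          exact Finset.sum_congr rfl fun k hk => by rw [if_pos (Finset.mem_range.1 hk)]
        have e3 : ∑ k ∈ Finset.range (m+2), (if 1 ≤ k then deriv (t (k-1)) u else 0) * l ^ k
            = ∑ k ∈ Finset.range (m+1), deriv (t k) u * l ^ (k+1) := by
          rw [Finset.sum_range_succ']
          simp
        have e4 : ∑ k ∈ Finset.range (m+2), (if k = 0 then -(F u) else 0) * l ^ k = -(F u) := by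
          rw [Finset.sum_eq_single 0]
          · simp
          · intro b _ hb; simp [hb]
          · intro h0; simp at h0
        rw [e1, e2, e3, e4]
        have e5 : ∑ k ∈ Finset.range (m+1), (-u * deriv (t k) u + (1/2) * t k u) * l ^ k
            + ∑ k ∈ Finset.range (m+1), deriv (t k) u * l ^ (k+1)
            = ∑ i ∈ Finset.range (m+1),
              (-(u - l) * deriv (t i) u * l ^ i + (1/2) * t i u * l ^ i) := by
          rw [← Finset.sum_add_distrib]
          exact Finset.sum_congr rfl fun k _ => by rw [pow_succ]; ring
        rw [e5, hkey u l]
        ring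
      have hz' := st3_coeffs_zero (m+2) a hz
      refine ⟨?_, ?_, ?_⟩
      · have h1 := hz' (m+1) (by omega)
        simp only [ha] at h1
        rw [if_neg (by omega), if_pos (by omega), if_neg (by omega)] at h1
        simpa using h1
      · intro k h1k hkm
        have h1 := hz' k (by omega)
        simp only [ha] at h1
        rw [if_pos (by omega), if_pos h1k, if_neg (by omega)] at h1
        linarith
      · have h1 := hz' 0 (by omega)
        simp only [ha] at h1
        norm_num at h1
        linarith
    have hm0 : ∀ u, deriv (t m) u = 0 := fun u => (hAk u).1
    have hrec : ∀ k, 1 ≤ k → k ≤ m →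
        ∀ u : ℝ, deriv (t (k-1)) u = u * deriv (t k) u - (1/2) * t k u :=
      fun k h1 h2 u => (hAk u).2.1 k h1 h2
    have hF0 : ∀ u : ℝ, F u = -u * deriv (t 0) u + (1/2) * t 0 u := fun u => (hAk u).2.2
    have hpoly : ∀ j, j ≤ m → ∃ r : Polynomial ℝ, ∀ u, t (m - j) u = r.eval u := by
      intro j
      induction j with
      | zero =>
        intro _
        exact st3_antideriv (t m) (htdiff m) 0 (by simpa using hm0)
      | succ j ih =>
        intro hj
        obtain ⟨r, hr⟩ := ih (by omega)
        have hk1 : 1 ≤ m - j := by omega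
        have hk2 : m - j ≤ m := by omega
        have heq : t (m - j) = fun u => r.eval u := funext hr
        have hder : ∀ u : ℝ, deriv (t (m - j - 1)) u
            = (Polynomial.X * Polynomial.derivative r - Polynomial.C (1/2) * r).eval u := by
          intro u
          rw [hrec (m - j) hk1 hk2 u]
          simp only [heq, Polynomial.deriv, Polynomial.eval_sub, Polynomial.eval_mul,
            Polynomial.eval_X, Polynomial.eval_C]
          try ring
        have hmj : m - (j+1) = m - j - 1 := by omega
        rw [hmj]
        exact st3_antideriv _ (htdiff _) _ hder
    obtain ⟨r, hr⟩ := hpoly m le_rfl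
    rw [Nat.sub_self] at hr
    refine ⟨-(Polynomial.X * Polynomial.derivative r) + Polynomial.C (1/2) * r, fun u => ?_⟩
    have h1 : φ u = sf u ^ 3 * F u := by
      rw [hFdef]; simp only
      rw [mul_comm, div_mul_cancel₀ _ (pow_ne_zero 3 (hsfpos u).ne')]
    rw [h1, hcube u, hF0 u]
    have heq0 : t 0 = fun u => r.eval u := funext hr
    simp only [heq0, Polynomial.deriv, Polynomial.eval_add, Polynomial.eval_neg,
      Polynomial.eval_mul, Polynomial.eval_X, Polynomial.eval_C]
    ring
  · -- ⊇ : every g^{3/2}·p is attained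
    rintro ⟨p, hp⟩
    set N := p.natDegree with hN
    refine ⟨N, fun i u => sf u * (∑ n ∈ Finset.range (N+1), p.coeff n * st3cc n i * u ^ (n - i)),
      ?_, ?_⟩
    · intro i
      apply ContDiff.mul
      · exact hg.sqrt (fun u => (hgpos u).ne')
      · exact ContDiff.sum fun n _ => contDiff_const.mul (contDiff_id.pow _)
    · intro u l
      set A : ℕ → ℝ := fun i => ∑ n ∈ Finset.range (N+1), p.coeff n * st3cc n i * u ^ (n - i)
        with hA
      set B : ℕ → ℝ := fun i =>
        ∑ n ∈ Finset.range (N+1), p.coeff n * st3cc n i * ((n - i : ℕ):ℝ) * u ^ (n - i - 1)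
        with hB
      have hTdiff : ∀ i, DifferentiableAt ℝ
          (fun u => ∑ n ∈ Finset.range (N+1), p.coeff n * st3cc n i * u ^ (n - i)) u :=
        fun i => DifferentiableAt.fun_sum fun n _ => (differentiableAt_pow _).const_mul _
      have hTd : ∀ i, deriv
          (fun u => ∑ n ∈ Finset.range (N+1), p.coeff n * st3cc n i * u ^ (n - i)) u = B i := by
        intro i
        rw [deriv_fun_sum fun n _ => (differentiableAt_pow _).const_mul _]
        rw [hB]
        exact Finset.sum_congr rfl fun n _ => st3_deriv_monomial _ _ u
      have hdh : ∀ i, deriv (fun u => sf u *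
          (∑ n ∈ Finset.range (N+1), p.coeff n * st3cc n i * u ^ (n - i))) u
          = deriv sf u * A i + sf u * B i := by
        intro i
        rw [deriv_fun_mul (hsfdiff u) (hTdiff i), hTd i, hA]
      have hsum1 : ∑ i ∈ Finset.range (N+1), deriv (fun u => sf u *
            (∑ n ∈ Finset.range (N+1), p.coeff n * st3cc n i * u ^ (n - i))) u * l ^ i
          = deriv sf u * (∑ i ∈ Finset.range (N+1), A i * l ^ i)
            + sf u * (∑ i ∈ Finset.range (N+1), B i * l ^ i) := by
        rw [Finset.mul_sum, Finset.mul_sum, ← Finset.sum_add_distrib]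
        exact Finset.sum_congr rfl fun i _ => by rw [hdh i]; ring
      have hsum2 : ∑ i ∈ Finset.range (N+1), (sf u *
            (∑ n ∈ Finset.range (N+1), p.coeff n * st3cc n i * u ^ (n - i))) * l ^ i
          = sf u * (∑ i ∈ Finset.range (N+1), A i * l ^ i) := by
        rw [Finset.mul_sum]
        exact Finset.sum_congr rfl fun i _ => by rw [hA]; ring
      have hcore := st3_core u l (g u) (deriv g u) (sf u) (deriv sf u)
        (∑ i ∈ Finset.range (N+1), A i * l ^ i)
        (∑ i ∈ Finset.range (N+1), B i * l ^ i) (hsq u) (hdg u)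
      have hinner : -(u-l) * (∑ i ∈ Finset.range (N+1), B i * l ^ i)
          + (1/2) * (∑ i ∈ Finset.range (N+1), A i * l ^ i) = p.eval u := by
        have hsplit : -(u-l) * (∑ i ∈ Finset.range (N+1), B i * l ^ i)
            + (1/2) * (∑ i ∈ Finset.range (N+1), A i * l ^ i)
            = ∑ i ∈ Finset.range (N+1), ∑ n ∈ Finset.range (N+1), p.coeff n *
              (-(u - l) * (st3cc n i * ((n - i : ℕ):ℝ) * u ^ (n - i - 1)) * l ^ i
                + (1/2) * (st3cc n i * u ^ (n - i)) * l ^ i) := by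
          rw [Finset.mul_sum, Finset.mul_sum, ← Finset.sum_add_distrib]
          apply Finset.sum_congr rfl
          intro i _
          rw [hA, hB]
          simp only
          rw [Finset.sum_mul, Finset.sum_mul, Finset.mul_sum, Finset.mul_sum,
            ← Finset.sum_add_distrib]
          exact Finset.sum_congr rfl fun n _ => by ring
        rw [hsplit, Finset.sum_comm]
        have hinner2 : ∀ n ∈ Finset.range (N+1),
            ∑ i ∈ Finset.range (N+1), p.coeff n *
              (-(u - l) * (st3cc n i * ((n - i : ℕ):ℝ) * u ^ (n - i - 1)) * l ^ i
                + (1/2) * (st3cc n i * u ^ (n - i)) * l ^ i)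
            = p.coeff n * u ^ n := by
          intro n hn
          rw [← Finset.mul_sum, st3_tele n N (by simpa [Nat.lt_succ] using hn) u l]
        rw [Finset.sum_congr rfl hinner2]
        exact (Polynomial.eval_eq_sum_range (p := p) u).symm
      rw [hsum1, hsum2, hcore, hinner, hp u, hcube u]
end

section
/- (Homological perturbation lemma, contraction form) Let C be a ℤ-graded module with maps d, d₀ : C^k → C^{k+1} both squaring to zero, with d = d₀ + α. Let h₀ : C^k → C^{k−1} satisfy h₀d₀ + d₀h₀ = 1. If the series h := Σ_{n≥0} (−1)^n (h₀α)^n h₀ is well-defined (e.g., h₀α is locally nilpotent), then hd + dh = 1. -/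
section Aux

variable {E : Type*} [Ring E]

/-- `a * (b*a)^n = (a*b)^n * a`. -/
lemma aux_mul_pow_mul (a b : E) (n : ℕ) : a * (b * a) ^ n = (a * b) ^ n * a := by
  induction n with
  | zero => simp
  | succ n ih =>
    rw [pow_succ, ← mul_assoc, ih, pow_succ]
    noncomm_ring

/-- The error term `T n = Σ_{i+j=n} A^i B^j` with `A = h₀α`, `B = αh₀`. -/
noncomputable def auxT (α h₀ : E) (n : ℕ) : E :=
  ∑ i ∈ Finset.range (n + 1), (h₀ * α) ^ i * (α * h₀) ^ (n - i)

/-- The truncated homotopy `S N = Σ_{n<N} (-1)^n A^n h₀`. -/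
noncomputable def auxS (α h₀ : E) (N : ℕ) : E :=
  ∑ n ∈ Finset.range N, ((-1 : ℤ) ^ n) • ((h₀ * α) ^ n * h₀)

lemma auxT_succ (α h₀ : E) (n : ℕ) :
    (h₀ * α) * auxT α h₀ n = auxT α h₀ (n + 1) - (α * h₀) ^ (n + 1) := by
  simp only [auxT]
  rw [Finset.mul_sum, Finset.sum_range_succ' (n := n + 1)]
  simp only [pow_zero, one_mul, Nat.succ_sub_succ, Nat.sub_zero]
  rw [add_sub_cancel_right]
  refine Finset.sum_congr rfl fun i _ => ?_
  rw [pow_succ']; simp only [mul_assoc]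

variable (d d₀ α h₀ : E)
variable (hd : d * d = 0) (hd₀ : d₀ * d₀ = 0) (hα : d = d₀ + α)
  (hcontr : h₀ * d₀ + d₀ * h₀ = 1)

include hd hd₀ hα in
lemma aux_rel : d₀ * α + α * d₀ + α * α = 0 := by
  have h : d₀ * α + α * d₀ + α * α = (d₀ + α) * (d₀ + α) - d₀ * d₀ := by noncomm_ring
  rw [h, ← hα, hd, hd₀, sub_zero]

include hd hd₀ hα hcontr in
lemma aux_dA : d * (h₀ * α) = (h₀ * α) * d + α + (α * h₀) * α := by
  have h1 := aux_rel d d₀ α hd hd₀ hα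
  have h1' : d₀ * α = -(α * d₀) - α * α := by
    have h : d₀ * α + (α * d₀ + α * α) = 0 := by rw [← h1]; abel
    have := eq_neg_of_add_eq_zero_left h
    rw [neg_add] at this
    rw [this]; abel
  have h2 : d₀ * h₀ = 1 - h₀ * d₀ := by
    rw [← hcontr]; abel
  have key : d₀ * (h₀ * α) = α + h₀ * α * d₀ + h₀ * (α * α) := by
    rw [← mul_assoc, h2, sub_mul, one_mul, mul_assoc h₀ d₀ α, h1']
    noncomm_ring
  rw [hα]
  have expand : (d₀ + α) * (h₀ * α) = d₀ * (h₀ * α) + α * (h₀ * α) := by noncomm_ring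
  rw [expand, key]
  noncomm_ring

include hd hd₀ hα hcontr in
/-- Key step identity: `A^n h₀ d + d A^n h₀ = T n + T (n+1)`. -/
lemma aux_step (n : ℕ) :
    (h₀ * α) ^ n * h₀ * d + d * ((h₀ * α) ^ n * h₀) =
      auxT α h₀ n + auxT α h₀ (n + 1) := by
  induction n with
  | zero =>
    simp only [pow_zero, one_mul, auxT]
    rw [Finset.sum_range_succ, Finset.sum_range_succ, Finset.sum_range_succ]
    simp only [Finset.sum_range_zero, pow_zero, pow_one, one_mul, mul_one, Nat.sub_self,
      Nat.sub_zero, zero_add]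
    rw [hα, ← hcontr]
    noncomm_ring
  | succ n ih =>
    have hdA := aux_dA d d₀ α h₀ hd hd₀ hα hcontr
    have e1 : (h₀ * α) ^ (n + 1) * h₀ * d = (h₀ * α) * ((h₀ * α) ^ n * h₀ * d) := by
      rw [pow_succ', mul_assoc (h₀ * α) _ h₀, mul_assoc (h₀ * α)]
    have hB : α * ((h₀ * α) ^ n * h₀) = (α * h₀) ^ (n + 1) := by
      rw [← mul_assoc, aux_mul_pow_mul, pow_succ, mul_assoc]
    have hB2 : (α * h₀) * (α * ((h₀ * α) ^ n * h₀)) = (α * h₀) ^ (n + 2) := by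
      rw [hB, ← pow_succ']
    have e2 : d * ((h₀ * α) ^ (n + 1) * h₀) =
        (h₀ * α) * (d * ((h₀ * α) ^ n * h₀)) +
          (α * h₀) ^ (n + 1) + (α * h₀) ^ (n + 2) := by
      rw [pow_succ' (h₀ * α) n, mul_assoc, ← mul_assoc d, hdA]
      calc ((h₀ * α) * d + α + (α * h₀) * α) * ((h₀ * α) ^ n * h₀)
          = (h₀ * α) * (d * ((h₀ * α) ^ n * h₀)) + α * ((h₀ * α) ^ n * h₀) +
            (α * h₀) * (α * ((h₀ * α) ^ n * h₀)) := by noncomm_ring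
        _ = _ := by rw [hB2, hB]
    rw [e1, e2]
    have rearr : (h₀ * α) * ((h₀ * α) ^ n * h₀ * d) + ((h₀ * α) * (d * ((h₀ * α) ^ n * h₀)) +
        (α * h₀) ^ (n + 1) + (α * h₀) ^ (n + 2)) =
        (h₀ * α) * ((h₀ * α) ^ n * h₀ * d + d * ((h₀ * α) ^ n * h₀)) +
        (α * h₀) ^ (n + 1) + (α * h₀) ^ (n + 2) := by noncomm_ring
    rw [rearr, ih, mul_add, auxT_succ, auxT_succ]
    abel

include hd hd₀ hα hcontr in
/-- `S N d + d S N = 1 + (-1)^(N+1) • T N`. -/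
lemma aux_SN (N : ℕ) :
    auxS α h₀ N * d + d * auxS α h₀ N =
      1 + ((-1 : ℤ) ^ (N + 1)) • auxT α h₀ N := by
  induction N with
  | zero =>
    simp [auxS, auxT]
  | succ N ih =>
    have hstep := aux_step d d₀ α h₀ hd hd₀ hα hcontr N
    rw [auxS, Finset.sum_range_succ, ← auxS]
    have expand : (auxS α h₀ N + (-1 : ℤ) ^ N • ((h₀ * α) ^ N * h₀)) * d +
        d * (auxS α h₀ N + (-1 : ℤ) ^ N • ((h₀ * α) ^ N * h₀)) =
        (auxS α h₀ N * d + d * auxS α h₀ N) +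
        (-1 : ℤ) ^ N • ((h₀ * α) ^ N * h₀ * d + d * ((h₀ * α) ^ N * h₀)) := by
      rw [add_mul, mul_add, smul_mul_assoc, mul_smul_comm, smul_add]
      abel
    rw [expand, ih, hstep, smul_add]
    have hs1 : ((-1 : ℤ) ^ (N + 1)) • auxT α h₀ N = -((-1 : ℤ) ^ N • auxT α h₀ N) := by
      rw [pow_succ, mul_comm, neg_one_mul, neg_smul]
    have hs2 : ((-1 : ℤ) ^ (N + 1 + 1)) • auxT α h₀ (N + 1) =
        (-1 : ℤ) ^ N • auxT α h₀ (N + 1) := by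
      rw [pow_succ, pow_succ, mul_assoc, neg_one_mul, neg_neg, mul_one]
    rw [hs1, hs2]
    abel

end Aux

/-- homological perturbation lemma, contraction form: if
`d = d₀ + α`, `d² = d₀² = 0`, `h₀ d₀ + d₀ h₀ = 1`, `h₀α` is locally nilpotent,
and `h = Σ (-1)^n (h₀α)^n h₀` (a finite sum on each element), then `h d + d h = 1`. -/
theorem stmt_4 (R : Type*) [CommRing R] (M : Type*) [AddCommGroup M] [Module R M]
    (d d₀ α h₀ h : Module.End R M)
    (hd : d * d = 0) (hd₀ : d₀ * d₀ = 0) (hα : d = d₀ + α)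
    (hcontr : h₀ * d₀ + d₀ * h₀ = 1)
    (hnil : ∀ x : M, ∃ N : ℕ, ((h₀ * α) ^ N) x = 0)
    (hh : ∀ (x : M) (N : ℕ), ((h₀ * α) ^ N) (h₀ x) = 0 →
      h x = ∑ n ∈ Finset.range N, ((-1 : ℤ) ^ n) • (((h₀ * α) ^ n) (h₀ x))) :
    h * d + d * h = 1 := by
  ext x
  -- monotonicity of vanishing
  have mono : ∀ (y : M) (m n : ℕ), m ≤ n → ((h₀ * α) ^ m) y = 0 → ((h₀ * α) ^ n) y = 0 := by
    intro y m n hmn hy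
    obtain ⟨k, rfl⟩ := Nat.exists_eq_add_of_le hmn
    rw [add_comm, pow_add, Module.End.mul_apply, hy, map_zero]
  obtain ⟨N₁, hN₁⟩ := hnil (h₀ (d x))
  obtain ⟨N₂, hN₂⟩ := hnil (h₀ x)
  -- bound for the mixed terms
  have hg : ∀ j : ℕ, ∃ g : ℕ, ((h₀ * α) ^ g) (((α * h₀) ^ j) x) = 0 := fun j =>
    hnil (((α * h₀) ^ j) x)
  choose g hgspec using hg
  set G : ℕ := (Finset.range (N₂ + 1)).sup g with hG
  set N : ℕ := max N₁ (max N₂ (G + N₂ + 1)) with hNdef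
  have hNN₁ : N₁ ≤ N := le_max_left _ _
  have hNN₂ : N₂ ≤ N := le_trans (le_max_left _ _) (le_max_right _ _)
  have hNG : G + N₂ + 1 ≤ N := le_trans (le_max_right _ _) (le_max_right _ _)
  -- identify h with the truncation S N pointwise
  have hSapply : ∀ y : M, auxS α h₀ N y =
      ∑ n ∈ Finset.range N, ((-1 : ℤ) ^ n) • (((h₀ * α) ^ n) (h₀ y)) := by
    intro y
    rw [auxS, LinearMap.sum_apply]
    refine Finset.sum_congr rfl fun n _ => ?_
    rw [LinearMap.smul_apply, Module.End.mul_apply]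
  have hhd : h (d x) = auxS α h₀ N (d x) := by
    rw [hh (d x) N (mono _ _ _ hNN₁ hN₁), hSapply]
  have hhx : h x = auxS α h₀ N x := by
    rw [hh x N (mono _ _ _ hNN₂ hN₂), hSapply]
  -- the truncated identity
  have key := aux_SN d d₀ α h₀ hd hd₀ hα hcontr N
  have keyx := congrArg (fun f : Module.End R M => f x) key
  simp only [LinearMap.add_apply, Module.End.mul_apply, LinearMap.smul_apply,
    Module.End.one_apply] at keyx
  -- the error term vanishes at x
  have hT : auxT α h₀ N x = 0 := by
    rw [auxT, LinearMap.sum_apply]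
    refine Finset.sum_eq_zero fun i hi => ?_
    rw [Finset.mem_range] at hi
    rw [Module.End.mul_apply]
    by_cases hj : N - i ≤ N₂
    · -- i ≥ G, so (h₀α)^i kills (αh₀)^(N-i) x
      have hiG : g (N - i) ≤ i := by
        have h1 : g (N - i) ≤ G :=
          Finset.le_sup (Finset.mem_range.mpr (Nat.lt_succ_of_le hj))
        omega
      exact mono _ _ _ hiG (hgspec (N - i))
    · -- N - i > N₂ : (αh₀)^(N-i) x = 0
      push_neg at hj
      have hj1 : 1 ≤ N - i := by omega
      have hzero' : ((α * h₀) ^ (N - i)) x = 0 := by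
        obtain ⟨k, hk⟩ := Nat.exists_eq_add_of_le hj1
        rw [hk, add_comm, pow_succ', mul_assoc, aux_mul_pow_mul h₀ α k]
        have hzero : ((h₀ * α) ^ k) (h₀ x) = 0 := mono _ _ _ (by omega) hN₂
        rw [Module.End.mul_apply, Module.End.mul_apply, hzero, map_zero]
      rw [hzero', map_zero]
  -- assemble
  simp only [LinearMap.add_apply, Module.End.mul_apply, Module.End.one_apply]
  rw [hhd, hhx, show d (auxS α h₀ N x) = (d * auxS α h₀ N) x from rfl,
    show auxS α h₀ N (d x) = (auxS α h₀ N * d) x from rfl]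
  rw [hT, smul_zero, add_zero] at keyx
  exact keyx
end

section
/- Let g be smooth and nowhere vanishing, and consider the first-order operator L(t) = −(u−λ)t_u + t/2 acting on C^∞(ℝ)[λ] (polynomials in λ with smooth coefficients, t_u the u-derivative). Then L is injective. -/
open Polynomial Finset

noncomputable def fall (j k : ℕ) : ℝ := ∏ m ∈ Finset.range k, ((j:ℝ) - m)

lemma fall_succ (j k : ℕ) : fall j (k+1) = fall j k * ((j:ℝ) - k) := by
  simp [fall, Finset.prod_range_succ]

lemma fall_eq_zero {j k : ℕ} (h : j < k) : fall j k = 0 :=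
  Finset.prod_eq_zero (Finset.mem_range.2 h) (by simp)

lemma fall_self_ne_zero (i : ℕ) : fall i i ≠ 0 := by
  apply Finset.prod_ne_zero_iff.2
  intro m hm
  have h : m < i := Finset.mem_range.1 hm
  have h2 : (m:ℝ) < i := by exact_mod_cast h
  intro hc; linarith [sub_eq_zero.1 hc]

lemma fall_mul_natsub (j k : ℕ) : fall j k * ((j - k : ℕ):ℝ) = fall j (k+1) := by
  rcases lt_or_ge j k with h | h
  · rw [fall_eq_zero h, fall_eq_zero (Nat.lt_succ_of_lt h)]; ring
  · rw [fall_succ]; congr 1; push_cast [h]; ring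

lemma iter_deriv_C_mul_X_pow (c : ℝ) (j k : ℕ) :
    derivative^[k] (C c * X ^ j : ℝ[X]) = C (c * fall j k) * X ^ (j - k) := by
  induction k with
  | zero => simp [fall]
  | succ k ih =>
      rw [Function.iterate_succ_apply', ih, derivative_C_mul, derivative_X_pow]
      rw [← mul_assoc, ← C_mul, mul_assoc c, fall_mul_natsub, Nat.sub_sub]

lemma iter_deriv_sum (s : Finset ℕ) (f : ℕ → ℝ[X]) (k : ℕ) :
    derivative^[k] (∑ j ∈ s, f j) = ∑ j ∈ s, derivative^[k] (f j) := by
  induction k with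
  | zero => simp
  | succ k ih =>
      rw [Function.iterate_succ_apply', ih, derivative_sum]
      exact Finset.sum_congr rfl fun j _ => (Function.iterate_succ_apply' derivative k (f j)).symm

lemma iter_deriv_linear_mul (u : ℝ) (p : ℝ[X]) (k : ℕ) :
    derivative^[k+1] ((C u - X) * p) =
      (C u - X) * derivative^[k+1] p - C ((k:ℝ)+1) * derivative^[k] p := by
  induction k with
  | zero =>
      rw [Function.iterate_succ_apply']
      simp only [Function.iterate_zero_apply, derivative_mul]
      simp only [derivative_sub, derivative_C, derivative_X, Function.iterate_one,
        Nat.cast_zero, zero_sub, zero_add, C_1]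
      ring
  | succ k ih =>
      rw [Function.iterate_succ_apply', ih, derivative_sub, derivative_mul,
        derivative_C_mul,
        ← Function.iterate_succ_apply' derivative (k+1) p,
        ← Function.iterate_succ_apply' derivative k p]
      simp only [derivative_sub, derivative_C, derivative_X, zero_sub,
        Nat.cast_add, Nat.cast_one, C_add, C_1]
      ring

lemma eval_iter_deriv_sum (c : ℕ → ℝ) (n k : ℕ) (u : ℝ) :
    Polynomial.eval u (derivative^[k] (∑ j ∈ Finset.range (n+1), C (c j) * X ^ j)) =
      ∑ j ∈ Finset.range (n+1), fall j k * c j * u ^ (j - k) := by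
  rw [iter_deriv_sum, eval_finset_sum]
  refine Finset.sum_congr rfl fun j _ => ?_
  rw [iter_deriv_C_mul_X_pow]
  simp only [eval_mul, eval_C, eval_pow, eval_X]
  ring

noncomputable def aa (t : ℕ → ℝ → ℝ) (n k : ℕ) (u : ℝ) : ℝ :=
  ∑ j ∈ Finset.range (n+1), fall j k * t j u * u ^ (j - k)

/-- the operator `L(t) = -(u-λ) t_u + t/2` is injective on
polynomials in `λ` with smooth coefficients. -/
theorem stmt_19 (g : ℝ → ℝ) (hg : ContDiff ℝ (⊤ : ℕ∞) g) (hg0 : ∀ u, g u ≠ 0)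
    (n : ℕ) (t : ℕ → ℝ → ℝ) (ht : ∀ i, ContDiff ℝ (⊤ : ℕ∞) (t i))
    (hL : ∀ u l : ℝ,
      -(u - l) * (∑ i ∈ Finset.range (n + 1), deriv (t i) u * l ^ i)
        + (∑ i ∈ Finset.range (n + 1), t i u * l ^ i) / 2 = 0) :
    ∀ i ≤ n, ∀ u : ℝ, t i u = 0 := by
  -- the polynomial identity Q = (C u - X) * P with P carrying 2 * derivatives
  have hQP : ∀ u : ℝ,
      (∑ j ∈ Finset.range (n+1), C (t j u) * X ^ j)
        = (C u - X) * (∑ j ∈ Finset.range (n+1), C (2 * deriv (t j) u) * X ^ j) := by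
    intro u
    apply Polynomial.funext
    intro l
    have h := hL u l
    simp only [eval_mul, eval_sub, eval_C, eval_X, eval_finset_sum, eval_pow]
    have e2 : (∑ x ∈ Finset.range (n+1), 2 * deriv (t x) u * l ^ x)
        = 2 * ∑ x ∈ Finset.range (n+1), deriv (t x) u * l ^ x := by
      rw [Finset.mul_sum]
      exact Finset.sum_congr rfl fun j _ => by ring
    rw [e2]
    linear_combination 2 * h
  -- A k u as polynomial eval
  have hA : ∀ k u, aa t n k u =
      eval u (derivative^[k] (∑ j ∈ Finset.range (n+1), C (t j u) * X ^ j)) := by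
    intro k u
    rw [eval_iter_deriv_sum (fun j => t j u) n k u]
    rfl
  have hB : ∀ k u,
      eval u (derivative^[k] (∑ j ∈ Finset.range (n+1), C (2 * deriv (t j) u) * X ^ j))
        = 2 * aa (fun j => deriv (t j)) n k u := by
    intro k u
    rw [eval_iter_deriv_sum (fun j => 2 * deriv (t j) u) n k u, aa, Finset.mul_sum]
    exact Finset.sum_congr rfl fun j _ => by ring
  -- base identity
  have hA0 : ∀ u, aa t n 0 u = 0 := by
    intro u
    rw [hA, Function.iterate_zero_apply, hQP]
    simp
  -- recurrence A (k+1) = -2 (k+1) B k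
  have hAk : ∀ k u, aa t n (k+1) u = -2 * ((k:ℝ)+1) * aa (fun j => deriv (t j)) n k u := by
    intro k u
    rw [hA, hQP, iter_deriv_linear_mul]
    simp only [eval_sub, eval_mul, eval_C, eval_X]
    rw [hB, hB]
    ring
  -- derivative of A k
  have hHD : ∀ k u, HasDerivAt (aa t n k)
      (aa (fun j => deriv (t j)) n k u + aa t n (k+1) u) u := by
    intro k u
    have hterm : ∀ j ∈ Finset.range (n+1),
        HasDerivAt (fun x => fall j k * t j x * x ^ (j - k))
          (fall j k * (deriv (t j) u * u ^ (j-k) + t j u * (((j-k:ℕ):ℝ) * u ^ (j-k-1)))) u := by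
      intro j _
      have h1 : HasDerivAt (t j) (deriv (t j) u) u :=
        (((ht j).differentiable (by simp)) u).hasDerivAt
      have h2 : HasDerivAt (fun x : ℝ => x ^ (j-k)) (((j-k:ℕ):ℝ) * u ^ (j-k-1)) u :=
        hasDerivAt_pow (j-k) u
      have h3 := (h1.mul h2).const_mul (fall j k)
      have heq : (fun x => fall j k * t j x * x ^ (j - k))
          = fun x => fall j k * (t j x * x ^ (j-k)) := by
        funext x; ring
      rw [heq]
      exact h3
    have := HasDerivAt.fun_sum hterm
    convert this using 1
    · rfl
    · rfl
    · rfl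
    rw [aa, aa, ← Finset.sum_add_distrib]
    refine Finset.sum_congr rfl fun j _ => ?_
    have hfm := fall_mul_natsub j k
    have hss : j - (k+1) = j - k - 1 := by omega
    rw [hss]
    linear_combination (-(t j u * u ^ (j - k - 1))) * hfm
  -- all A k vanish
  have hAzero : ∀ k u, aa t n k u = 0 := by
    intro k
    induction k with
    | zero => exact hA0
    | succ k ih =>
      intro u
      have hfun : aa t n k = fun _ => (0:ℝ) := funext ih
      have hz : HasDerivAt (aa t n k) 0 u := by
        rw [hfun]; exact hasDerivAt_const u 0
      have heq := (hHD k u).unique hz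
      -- B k u + A (k+1) u = 0
      have hrec := hAk k u
      have hc : (1:ℝ) - 2*((k:ℝ)+1) < 0 := by
        have : (0:ℝ) ≤ (k:ℝ) := Nat.cast_nonneg k
        linarith
      have hBk : aa (fun j => deriv (t j)) n k u = 0 := by
        nlinarith [heq, hrec]
      rw [hAk, hBk]; ring
  -- extraction
  have extract : ∀ i, i ≤ n → (∀ j, i < j → j ≤ n → ∀ u, t j u = 0) → ∀ u, t i u = 0 := by
    intro i hi hj u
    have h := hAzero i u
    rw [aa, Finset.sum_eq_single_of_mem i (Finset.mem_range.2 (by omega))] at h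
    · simp only [Nat.sub_self, pow_zero, mul_one] at h
      rcases mul_eq_zero.1 h with h0 | h0
      · exact absurd h0 (fall_self_ne_zero i)
      · exact h0
    · intro j hjm hne
      rcases lt_or_gt_of_ne hne with hlt | hgt
      · rw [fall_eq_zero hlt]; ring
      · rw [hj j hgt (by simpa using Nat.lt_succ_iff.1 (Finset.mem_range.1 hjm))]; ring
  have key : ∀ m : ℕ, ∀ i, i ≤ n → n ≤ i + m → ∀ u, t i u = 0 := by
    intro m
    induction m with
    | zero =>
      intro i hi hni u
      exact extract i hi (fun j h1 h2 u => by omega) u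
    | succ m ih =>
      intro i hi hni u
      exact extract i hi (fun j h1 h2 u => ih j h2 (by omega) u) u
  intro i hi u
  exact key (n - i) i hi (by omega) u
end
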